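/- arXiv:1902.05878 — 2 statements merged into one kernel-verified Lean document; each statement's English description precedes it below -/
import Mathlib

section
/- Let $(\eta_k)_{k\ge 0}$ be a sequence of real numbers with $0<\eta_k\le 1$ for all $k$, and suppose there exist constants $0<\gamma<1$, $b>0$, $c\ge 1$ such that $\eta_{k+1}\le c(\eta_k+b)^\gamma$ for all $k$. Then $\eta_k\le C(\eta_0+b)^{\gamma^k}$ for all $k$, where $C=(2c)^{1/(1-\gamma)}$. -/
/-!
Put `x = η 0 + b` and `C = (2c)^(1/(1-γ))`, the fixed point of `t ↦ 2c t^γ`. If `x ≥ 1` the bound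
holds because `η k ≤ 1 ≤ C`. If `x < 1`, then `b ≤ x ≤ x^(γ^k)`, so the bound for `η k` gives
`η k + b ≤ 2C x^(γ^k)`, and `c (2C)^γ ≤ 2c C^γ = C` carries the bound over to `η (k+1)`.
-/

open Real

lemma mul_rpow_one_div_one_sub_rpow {a γ : ℝ} (ha : 0 ≤ a) (hγ : γ ≠ 1) :
    a * (a ^ (1 / (1 - γ))) ^ γ = a ^ (1 / (1 - γ)) := by
  have h1γ : 1 - γ ≠ 0 := sub_ne_zero.mpr hγ.symm
  have hexp : 1 + 1 / (1 - γ) * γ = 1 / (1 - γ) := by field_simp; ring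
  calc a * (a ^ (1 / (1 - γ))) ^ γ = a ^ (1 + 1 / (1 - γ) * γ) := by
        rw [← rpow_mul ha, rpow_add' ha (by rw [hexp]; exact one_div_ne_zero h1γ), rpow_one]
    _ = a ^ (1 / (1 - γ)) := by rw [hexp]

lemma one_le_rpow_one_div_one_sub {a γ : ℝ} (ha : 1 ≤ a) (hγ : γ < 1) :
    1 ≤ a ^ (1 / (1 - γ)) :=
  one_le_rpow ha (one_div_nonneg.mpr (sub_nonneg.mpr hγ.le))

lemma mul_rpow_two_mul_le {γ c y : ℝ} (hγ1 : γ < 1) (hc : 0 ≤ c) (hy : 0 ≤ y) :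
    c * (2 * (2 * c) ^ (1 / (1 - γ)) * y) ^ γ ≤ (2 * c) ^ (1 / (1 - γ)) * y ^ γ := by
  set C := (2 * c) ^ (1 / (1 - γ))
  have hC : 0 ≤ C := by positivity
  have h2γ : (2 : ℝ) ^ γ ≤ 2 := by
    simpa using rpow_le_rpow_of_exponent_le (by norm_num : (1 : ℝ) ≤ 2) hγ1.le
  calc c * (2 * C * y) ^ γ = 2 ^ γ * c * C ^ γ * y ^ γ := by
        rw [mul_rpow (by positivity) hy, mul_rpow zero_le_two hC]; ring
    _ ≤ 2 * c * C ^ γ * y ^ γ := by gcongr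
    _ = C * y ^ γ := by rw [mul_rpow_one_div_one_sub_rpow (by positivity) hγ1.ne]

lemma le_mul_rpow_pow_of_le_mul_add_rpow {η : ℕ → ℝ} {γ b c x : ℝ} (hγ0 : 0 ≤ γ) (hγ1 : γ < 1)
    (hc : 1 ≤ 2 * c) (hx0 : 0 < x) (hx1 : x ≤ 1) (hbx : b ≤ x) (hη0 : η 0 ≤ x)
    (hηb : ∀ k, 0 ≤ η k + b) (hrec : ∀ k : ℕ, η (k + 1) ≤ c * (η k + b) ^ γ) :
    ∀ k : ℕ, η k ≤ (2 * c) ^ (1 / (1 - γ)) * x ^ (γ ^ k) := by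
  set C := (2 * c) ^ (1 / (1 - γ))
  have hC : 1 ≤ C := one_le_rpow_one_div_one_sub hc hγ1
  intro k
  induction k with
  | zero => simpa using hη0.trans (le_mul_of_one_le_left hx0.le hC)
  | succ k ih =>
    have hxk : 0 < x ^ (γ ^ k) := rpow_pos_of_pos hx0 _
    have hbxk : b ≤ x ^ (γ ^ k) :=
      hbx.trans (self_le_rpow_of_le_one hx0.le hx1 (pow_le_one₀ hγ0 hγ1.le))
    have hsum : η k + b ≤ 2 * C * x ^ (γ ^ k) := by nlinarith
    calc η (k + 1) ≤ c * (η k + b) ^ γ := hrec k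
      _ ≤ c * (2 * C * x ^ (γ ^ k)) ^ γ := by
          gcongr
          · linarith
          · exact hηb k
      _ ≤ C * (x ^ (γ ^ k)) ^ γ := mul_rpow_two_mul_le hγ1 (by linarith) hxk.le
      _ = C * x ^ (γ ^ (k + 1)) := by rw [← rpow_mul hx0.le, pow_succ]

/-- Iteration lemma: a sequence in `(0,1]` satisfying the recursive power-type
inequality `η (k+1) ≤ c (η k + b)^γ` satisfies `η k ≤ (2c)^(1/(1-γ)) (η 0 + b)^(γ^k)`. -/
theorem stmt0 (η : ℕ → ℝ) (γ b c : ℝ) (hγ0 : 0 < γ) (hγ1 : γ < 1) (hb : 0 < b)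
    (hc : 1 ≤ c) (hηpos : ∀ k, 0 < η k) (hηle : ∀ k, η k ≤ 1)
    (hrec : ∀ k : ℕ, η (k + 1) ≤ c * (η k + b) ^ γ) :
    ∀ k : ℕ, η k ≤ (2 * c) ^ (1 / (1 - γ)) * (η 0 + b) ^ (γ ^ k) := by
  intro k
  rcases le_or_gt 1 (η 0 + b) with hx | hx
  · calc η k ≤ 1 := hηle k
      _ ≤ _ := one_le_mul_of_one_le_of_one_le (one_le_rpow_one_div_one_sub (by linarith) hγ1)
          (one_le_rpow hx (by positivity))
  · exact le_mul_rpow_pow_of_le_mul_add_rpow hγ0.le hγ1 (by linarith) (by linarith [hηpos 0]) hx.le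
      (by linarith [hηpos 0]) (by linarith) (fun k ↦ by linarith [hηpos k]) hrec k
end

section
/- Let $\Omega\subset\mathbb{R}^n$ be bounded with Lipschitz boundary, $x_0\in\overline{\Omega}$, $m(x)=x-x_0$, and let $u\in H^1(\Omega)$ vanish on $\partial\Omega$ (for a.e. fixed time $t$). Then the multiplier $w=2(m\cdot\nabla u)+(n-1)u$ satisfies $\|w(\cdot,t)\|_{L^2(\Omega)}\le \|2\,m\cdot\nabla u(\cdot,t)\|_{L^2(\Omega)}$. -/
/-!
Extend `u ^ 2` by zero outside `Ω`: since `u` vanishes on `∂Ω`, the extension is `C¹` with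
compact support, so the divergence theorem for the field `u ^ 2 (x - x₀)` on the whole space gives
`2 ∫_Ω u (m · ∇u) = -n ∫_Ω u²`. Expanding the square,
`‖w‖² = ‖2 m · ∇u‖² - (n - 1)(n + 1) ∫_Ω u² ≤ ‖2 m · ∇u‖²`.
-/

open MeasureTheory Module Set

section Indicator

variable {𝕜 E F : Type*} [NontriviallyNormedField 𝕜] [NormedAddCommGroup E] [NormedSpace 𝕜 E]
  [NormedAddCommGroup F] [NormedSpace 𝕜 F]

theorem hasFDerivAt_indicator_of_frontier {Ω : Set E} {f : E → F} {f' : E → E →L[𝕜] F}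
    (hΩ : IsOpen Ω) (hf : ∀ x, HasFDerivAt f (f' x) x)
    (hfr : ∀ x ∈ frontier Ω, f x = 0 ∧ f' x = 0) (x : E) :
    HasFDerivAt (Ω.indicator f) (Ω.indicator f' x) x := by
  by_cases hx : x ∈ Ω
  · rw [indicator_of_mem hx]
    refine (hf x).congr_of_eventuallyEq ?_
    filter_upwards [hΩ.mem_nhds hx] with y hy
    exact indicator_of_mem hy f
  by_cases hcl : x ∈ closure Ω
  · obtain ⟨hfx, hf'x⟩ := hfr x ⟨hcl, by rwa [hΩ.interior_eq]⟩
    have h0 := hf x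
    rw [hf'x, hasFDerivAt_iff_isLittleO_nhds_zero, hfx] at h0
    rw [indicator_of_notMem hx, hasFDerivAt_iff_isLittleO_nhds_zero]
    refine (Asymptotics.isBigO_of_le _ fun h => ?_).trans_isLittleO h0
    simp only [indicator_of_notMem hx, zero_apply, sub_zero]
    exact norm_indicator_le_norm_self f _
  · rw [indicator_of_notMem hx]
    refine (hasFDerivAt_const 0 x).congr_of_eventuallyEq ?_
    filter_upwards [isClosed_closure.isOpen_compl.mem_nhds hcl] with y hy
    exact indicator_of_notMem (fun h => hy (subset_closure h)) _

end Indicator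

section Square

variable {E : Type*} [NormedAddCommGroup E] [NormedSpace ℝ E] {Ω : Set E} {u : E → ℝ}

theorem hasFDerivAt_indicator_sq (hΩ : IsOpen Ω) (hu : Differentiable ℝ u)
    (hbd : ∀ x ∈ frontier Ω, u x = 0) (x : E) :
    HasFDerivAt (Ω.indicator fun y => u y ^ 2)
      (Ω.indicator (fun y => (2 * u y) • fderiv ℝ u y) x) x :=
  hasFDerivAt_indicator_of_frontier hΩ (fun y => by simpa using (hu y).hasFDerivAt.pow 2)
    (fun y hy => by simp [hbd y hy]) x

theorem contDiff_one_indicator_sq (hΩ : IsOpen Ω) (hu : ContDiff ℝ 1 u)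
    (hbd : ∀ x ∈ frontier Ω, u x = 0) :
    ContDiff ℝ 1 (Ω.indicator fun y => u y ^ 2) := by
  have hd := hasFDerivAt_indicator_sq hΩ (hu.differentiable one_ne_zero) hbd
  rw [contDiff_one_iff_fderiv, funext fun x => (hd x).fderiv]
  refine ⟨fun x => (hd x).differentiableAt, continuous_indicator (fun x hx => by simp [hbd x hx]) ?_⟩
  exact ((continuous_const.mul hu.continuous).smul (hu.continuous_fderiv one_ne_zero)).continuousOn

end Square

section Divergence

variable {E : Type*} [NormedAddCommGroup E] [NormedSpace ℝ E] [FiniteDimensional ℝ E]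
  [MeasurableSpace E] [BorelSpace E] {μ : Measure E} [μ.IsAddHaarMeasure]

/-- The divergence theorem for the vector field `g x • (x - x₀)`, whose divergence is
`g' x (x - x₀) + (dim E) g x`. -/
theorem integral_fderiv_apply_sub_eq_neg_finrank_mul {g : E → ℝ} (hg : ContDiff ℝ 1 g)
    (hsupp : HasCompactSupport g) (x₀ : E) :
    ∫ x, fderiv ℝ g x (x - x₀) ∂μ = -(finrank ℝ E) * ∫ x, g x ∂μ := by
  have hg' : Continuous (fderiv ℝ g) := hg.continuous_fderiv one_ne_zero
  let b := Module.finBasis ℝ E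
  obtain ⟨c, hcb, hrepr⟩ : ∃ c : Fin (finrank ℝ E) → E →L[ℝ] ℝ,
      (∀ i, c i (b i) = 1) ∧ ∀ v, ∑ i, c i v • b i = v :=
    ⟨fun i => LinearMap.toContinuousLinearMap (b.coord i), by simp, b.sum_repr⟩
  have hc : ∀ i, fderiv ℝ (fun y => c i (y - x₀)) = fun _ => c i := fun i =>
    funext fun x => ((c i).hasFDerivAt.comp x ((hasFDerivAt_id x).sub_const x₀)).fderiv
  have hterm : ∀ i, Integrable (fun x => fderiv ℝ g x (b i) * c i (x - x₀)) μ := by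
    intro i
    have hcont : Continuous fun x => fderiv ℝ g x (b i) * c i (x - x₀) :=
      (hg'.clm_apply continuous_const).mul
        ((c i).continuous.comp (continuous_id.sub continuous_const))
    have hcs : HasCompactSupport fun x => fderiv ℝ g x (b i) :=
      (hsupp.fderiv (𝕜 := ℝ)).comp_left (g := fun L : E →L[ℝ] ℝ => L (b i)) (by simp)
    exact hcont.integrable_of_hasCompactSupport hcs.mul_right
  have hparts : ∀ i, ∫ x, fderiv ℝ g x (b i) * c i (x - x₀) ∂μ = -∫ x, g x ∂μ := by
    intro i
    have h := integral_mul_fderiv_eq_neg_fderiv_mul_of_integrable (μ := μ) (f := g)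
      (g := fun y => c i (y - x₀)) (v := b i) (hterm i) ?_ ?_
      (fun x _ => hg.differentiable one_ne_zero x) (fun x _ => by fun_prop)
    · simp only [hc, hcb, mul_one] at h
      rw [h, neg_neg]
    · simpa only [hc, hcb, mul_one] using hg.continuous.integrable_of_hasCompactSupport hsupp
    · exact (hg.continuous.mul (by fun_prop)).integrable_of_hasCompactSupport hsupp.mul_right
  have hsum : ∀ x, fderiv ℝ g x (x - x₀) = ∑ i, fderiv ℝ g x (b i) * c i (x - x₀) := by
    intro x
    conv_lhs => rw [← hrepr (x - x₀)]
    simp [mul_comm]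
  simp_rw [hsum]
  rw [integral_finsetSum _ fun i _ => hterm i, Finset.sum_congr rfl fun i _ => hparts i]
  simp

end Divergence

theorem Continuous.integrableOn_of_isBounded {X F : Type*} [MetricSpace X] [ProperSpace X]
    [MeasurableSpace X] [OpensMeasurableSpace X] {μ : Measure X} [IsFiniteMeasureOnCompacts μ]
    [NormedAddCommGroup F] {f : X → F} {s : Set X} (hf : Continuous f) (hs : Bornology.IsBounded s) :
    IntegrableOn f s μ :=
  (hf.continuousOn.integrableOn_compact hs.isCompact_closure).mono_set subset_closure

theorem integral_add_sq {α : Type*} [MeasurableSpace α] {μ : Measure α} {f g : α → ℝ}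
    (hf : Integrable (fun x => f x ^ 2) μ) (hfg : Integrable (fun x => f x * g x) μ)
    (hg : Integrable (fun x => g x ^ 2) μ) :
    ∫ x, (f x + g x) ^ 2 ∂μ = ∫ x, f x ^ 2 ∂μ + 2 * ∫ x, f x * g x ∂μ + ∫ x, g x ^ 2 ∂μ := by
  have hcross : Integrable (fun x => 2 * (f x * g x)) μ := hfg.const_mul 2
  have hf_cross : Integrable (fun x => f x ^ 2 + 2 * (f x * g x)) μ := hf.add hcross
  calc ∫ x, (f x + g x) ^ 2 ∂μ = ∫ x, (f x ^ 2 + 2 * (f x * g x) + g x ^ 2) ∂μ :=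
        integral_congr_ae (.of_forall fun x => by ring)
    _ = _ := by
        rw [integral_add hf_cross hg, integral_add hf hcross, integral_const_mul]

section InnerProduct

variable {E : Type*} [NormedAddCommGroup E] [InnerProductSpace ℝ E] [FiniteDimensional ℝ E]
  [MeasurableSpace E] [BorelSpace E] {μ : Measure E} [μ.IsAddHaarMeasure]

theorem two_mul_setIntegral_mul_inner_gradient {Ω : Set E} {u : E → ℝ} (hΩo : IsOpen Ω)
    (hΩb : Bornology.IsBounded Ω) (hu : ContDiff ℝ 1 u) (hbd : ∀ x ∈ frontier Ω, u x = 0)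
    (x₀ : E) :
    2 * ∫ x in Ω, u x * inner ℝ (x - x₀) (gradient u x) ∂μ =
      -(finrank ℝ E) * ∫ x in Ω, u x ^ 2 ∂μ := by
  have hsupp : HasCompactSupport (Ω.indicator fun y => u y ^ 2) :=
    .intro hΩb.isCompact_closure fun x hx => indicator_of_notMem (fun h => hx (subset_closure h)) _
  have h := integral_fderiv_apply_sub_eq_neg_finrank_mul (μ := μ)
    (contDiff_one_indicator_sq hΩo hu hbd) hsupp x₀
  have hd := hasFDerivAt_indicator_sq hΩo (hu.differentiable one_ne_zero) hbd
  have hintegrand : ∀ x, fderiv ℝ (Ω.indicator fun y => u y ^ 2) x (x - x₀) =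
      Ω.indicator (fun y => 2 * (u y * inner ℝ (y - x₀) (gradient u y))) x := by
    intro x
    by_cases hx : x ∈ Ω
    · simp [(hd x).fderiv, indicator_of_mem hx, inner_gradient_right, mul_assoc]
    · simp [(hd x).fderiv, indicator_of_notMem hx]
  simp_rw [hintegrand] at h
  rwa [integral_indicator hΩo.measurableSet, integral_indicator hΩo.measurableSet,
    integral_const_mul] at h

end InnerProduct

theorem stmt11_general (n : ℕ) (hn : 1 ≤ n) (Ω : Set (EuclideanSpace ℝ (Fin n)))
    (hΩo : IsOpen Ω) (hΩb : Bornology.IsBounded Ω) (x₀ : EuclideanSpace ℝ (Fin n))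
    (u : EuclideanSpace ℝ (Fin n) → ℝ) (hu : ContDiff ℝ 1 u)
    (hbd : ∀ x ∈ frontier Ω, u x = 0) :
    Real.sqrt (∫ x in Ω,
        (2 * (inner ℝ (x - x₀) (gradient u x) : ℝ) + ((n : ℝ) - 1) * u x) ^ 2) ≤
      Real.sqrt (∫ x in Ω, (2 * (inner ℝ (x - x₀) (gradient u x) : ℝ)) ^ 2) := by
  have key := two_mul_setIntegral_mul_inner_gradient (μ := volume) hΩo hΩb hu hbd x₀
  rw [finrank_euclideanSpace_fin] at key
  set M := fun x => inner ℝ (x - x₀) (gradient u x)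
  have hM : Continuous M := (continuous_id.sub continuous_const).inner
    ((InnerProductSpace.toDual ℝ _).symm.continuous.comp (hu.continuous_fderiv one_ne_zero))
  have hu_cont := hu.continuous
  have hcross : ∫ x in Ω, 2 * M x * (((n : ℝ) - 1) * u x) =
      ((n : ℝ) - 1) * (2 * ∫ x in Ω, u x * M x) := by
    rw [← integral_const_mul, ← integral_const_mul]
    exact integral_congr_ae (.of_forall fun x => by ring)
  have hsq : ∫ x in Ω, (((n : ℝ) - 1) * u x) ^ 2 = ((n : ℝ) - 1) ^ 2 * ∫ x in Ω, u x ^ 2 := by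
    rw [← integral_const_mul]
    exact integral_congr_ae (.of_forall fun x => by ring)
  have hloss : 0 ≤ ((n : ℝ) - 1) * (n + 1) * ∫ x in Ω, u x ^ 2 :=
    mul_nonneg (mul_nonneg (sub_nonneg.2 (Nat.one_le_cast.2 hn)) (by positivity))
      (setIntegral_nonneg hΩo.measurableSet fun x _ => sq_nonneg _)
  show √(∫ x in Ω, (2 * M x + ((n : ℝ) - 1) * u x) ^ 2) ≤ √(∫ x in Ω, (2 * M x) ^ 2)
  apply Real.sqrt_le_sqrt
  rw [integral_add_sq ((by fun_prop : Continuous _).integrableOn_of_isBounded hΩb)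
    ((by fun_prop : Continuous _).integrableOn_of_isBounded hΩb)
    ((by fun_prop : Continuous _).integrableOn_of_isBounded hΩb), hcross, hsq, key]
  linear_combination hloss

/-- Multiplier bound: for `u` vanishing on `∂Ω`, the multiplier
`w = 2 m·∇u + (n-1)u` with `m(x) = x - x₀` satisfies `‖w‖_{L²(Ω)} ≤ ‖2 m·∇u‖_{L²(Ω)}`. -/
theorem stmt11 (n : ℕ) (hn : 1 ≤ n) (Ω : Set (EuclideanSpace ℝ (Fin n)))
    (hΩo : IsOpen Ω) (hΩb : Bornology.IsBounded Ω) (x₀ : EuclideanSpace ℝ (Fin n))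
    (u : EuclideanSpace ℝ (Fin n) → ℝ) (hu : ContDiff ℝ 1 u)
    (hbd : ∀ x ∈ frontier Ω, u x = 0)
    (hint1 : IntegrableOn (fun x => u x ^ 2) Ω)
    (hint2 : IntegrableOn
      (fun x => (inner ℝ (x - x₀) (gradient u x) : ℝ) ^ 2) Ω) :
    Real.sqrt (∫ x in Ω,
        (2 * (inner ℝ (x - x₀) (gradient u x) : ℝ) + ((n : ℝ) - 1) * u x) ^ 2) ≤
      Real.sqrt (∫ x in Ω, (2 * (inner ℝ (x - x₀) (gradient u x) : ℝ)) ^ 2) :=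
  stmt11_general n hn Ω hΩo hΩb x₀ u hu hbd
end
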